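/- arXiv:1105.2881 — 4 statements merged into one kernel-verified Lean document; each statement's English description precedes it below -/
import Mathlib

section
/- Let (F_t)_{t≥0} be a continuous one-parameter semigroup on Δ with Denjoy–Wolff point τ = 1 whose generator f admits the representation f(z) = b(z−1)² + R(z), where b ∈ ℂ and lim_{z→1, z∈Δ} R(z)/(z−1)² = 0. Then for every z ∈ Δ, lim_{t→∞} 1/(t·(1 − F_t(z))) = −b; that is, 1/(1 − F_t(z)) = −bt + G(z,t) with G(z,t)/t → 0 as t → ∞. -/
/-!
Along a trajectory `w(t) = F_t(z)` the function `u = 1/(1 - w)` satisfies `u' = -f(w)/(w - 1)²`,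
which tends to `-b` because `w(t) → 1` inside the disk. By the mean value inequality, a function
whose derivative tends to `L` grows like `L t`, so `u(t)/t → -b`.
-/

open Complex Filter Topology Set MeasureTheory

noncomputable section

/-- The open unit disk in the complex plane. -/
def unitDisk : Set ℂ := {z : ℂ | ‖z‖ < 1}

/-- A continuous one-parameter semigroup `F` on the unit disk with
(infinitesimal) generator `f`: each `F t` is a holomorphic self-map of the disk,
`F 0 = id`, `F (t+s) = F t ∘ F s`, and for each `z` in the disk the trajectory
`t ↦ F t z` solves `∂F_t(z)/∂t + f(F_t(z)) = 0`. -/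
structure IsContinuousSemigroupOnDisk (F : ℝ → ℂ → ℂ) (f : ℂ → ℂ) : Prop where
  mapsTo : ∀ t : ℝ, 0 ≤ t → Set.MapsTo (F t) unitDisk unitDisk
  holomorphic : ∀ t : ℝ, 0 ≤ t → DifferentiableOn ℂ (F t) unitDisk
  init : ∀ z ∈ unitDisk, F 0 z = z
  semigroup : ∀ t s : ℝ, 0 ≤ t → 0 ≤ s → ∀ z ∈ unitDisk, F (t + s) z = F t (F s z)
  gen_holomorphic : DifferentiableOn ℂ f unitDisk
  ode : ∀ z ∈ unitDisk, ∀ t : ℝ, 0 ≤ t →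
    HasDerivWithinAt (fun s : ℝ => F s z) (-(f (F t z))) (Set.Ici (0 : ℝ)) t

/-- The semigroup has Denjoy–Wolff point `τ = 1`. -/
def HasDWPointOne (F : ℝ → ℂ → ℂ) : Prop :=
  ∀ z ∈ unitDisk, Tendsto (fun t : ℝ => F t z) atTop (𝓝 (1 : ℂ))

/-- `h` is the Koenigs function of the generator `f`: `h' = -1/f` on the disk and `h 0 = 0`. -/
def IsKoenigsFunction (f h : ℂ → ℂ) : Prop :=
  (∀ z ∈ unitDisk, HasDerivAt h (-(1 / f z)) z) ∧ h 0 = 0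

open Asymptotics

section GrowthFromDerivative

variable {E : Type*} [NormedAddCommGroup E] [NormedSpace ℝ E] {g g' : ℝ → E} {a : ℝ}

theorem isLittleO_id_atTop_of_hasDerivWithinAt_of_tendsto_zero
    (hg : ∀ t ∈ Ici a, HasDerivWithinAt g (g' t) (Ici a) t) (hg' : Tendsto g' atTop (𝓝 0)) :
    g =o[atTop] id := by
  refine IsLittleO.of_bound fun c hc => ?_
  obtain ⟨T, hTa, hT0, hT⟩ : ∃ T, a ≤ T ∧ 0 ≤ T ∧ ∀ s ∈ Ici T, ‖g' s‖ ≤ c / 2 := by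
    obtain ⟨T, hT⟩ := eventually_atTop.1 <|
      (tendsto_zero_iff_norm_tendsto_zero.1 hg').eventually (eventually_le_nhds (half_pos hc))
    exact ⟨max T (max a 0), by simp, by simp, fun s hs => hT s (le_of_max_le_left hs)⟩
  have hmvt : ∀ t ∈ Ici T, ‖g t - g T‖ ≤ c / 2 * ‖t - T‖ := fun t ht =>
    (convex_Ici T).norm_image_sub_le_of_norm_hasDerivWithin_le
      (fun s hs => (hg s (hTa.trans hs)).mono (Ici_subset_Ici.2 hTa)) hT self_mem_Ici ht
  filter_upwards [eventually_ge_atTop T, eventually_ge_atTop (2 * ‖g T‖ / c)] with t htT ht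
  have hgT : ‖g T‖ ≤ c / 2 * t := by
    rw [div_le_iff₀ hc] at ht
    linarith
  calc ‖g t‖ ≤ ‖g t - g T‖ + ‖g T‖ := norm_le_norm_sub_add _ _
    _ ≤ c / 2 * (t - T) + c / 2 * t := by
        gcongr
        simpa [abs_of_nonneg (sub_nonneg.2 htT)] using hmvt t htT
    _ ≤ c * ‖id t‖ := by
        rw [id, Real.norm_of_nonneg (hT0.trans htT)]
        nlinarith

theorem tendsto_inv_smul_atTop_of_hasDerivWithinAt {L : E}
    (hg : ∀ t ∈ Ici a, HasDerivWithinAt g (g' t) (Ici a) t) (hg' : Tendsto g' atTop (𝓝 L)) :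
    Tendsto (fun t : ℝ => t⁻¹ • g t) atTop (𝓝 L) := by
  have hderiv : ∀ t ∈ Ici a, HasDerivWithinAt (fun s : ℝ => g s - s • L) (g' t - L) (Ici a) t :=
    fun t ht => by simpa using (hg t ht).fun_sub ((hasDerivWithinAt_id t (Ici a)).smul_const L)
  have ho := isLittleO_id_atTop_of_hasDerivWithinAt_of_tendsto_zero hderiv
    (by simpa using hg'.sub_const L)
  refine (zero_add L ▸ ho.tendsto_inv_smul_nhds_zero.add_const L).congr' ?_
  filter_upwards [eventually_ne_atTop 0] with t ht
  simp [smul_sub, smul_smul, inv_mul_cancel₀ ht]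

end GrowthFromDerivative

theorem tendsto_div_sub_one_sq_of_tendsto_remainder {f : ℂ → ℂ} {b : ℂ} {s : Set ℂ}
    (hs : (1 : ℂ) ∉ s)
    (hrep : Tendsto (fun z : ℂ => (f z - b * (z - 1) ^ 2) / (z - 1) ^ 2) (𝓝[s] 1) (𝓝 0)) :
    Tendsto (fun z : ℂ => f z / (z - 1) ^ 2) (𝓝[s] 1) (𝓝 b) := by
  refine (by simpa using hrep.add_const b : Tendsto _ _ (𝓝 b)).congr' ?_
  filter_upwards [self_mem_nhdsWithin] with z hz
  have : z - 1 ≠ 0 := sub_ne_zero.2 (ne_of_mem_of_not_mem hz hs)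
  field_simp
  ring

theorem one_notMem_unitDisk : (1 : ℂ) ∉ unitDisk := by
  simp [unitDisk]

namespace IsContinuousSemigroupOnDisk

variable {F : ℝ → ℂ → ℂ} {f : ℂ → ℂ}

theorem hasDerivWithinAt_inv_one_sub (hsg : IsContinuousSemigroupOnDisk F f) {z : ℂ}
    (hz : z ∈ unitDisk) {t : ℝ} (ht : t ∈ Ici 0) :
    HasDerivWithinAt (fun s : ℝ => (1 - F s z)⁻¹) (-(f (F t z) / (F t z - 1) ^ 2)) (Ici 0) t := by
  have hne : F t z - 1 ≠ 0 :=
    sub_ne_zero.2 (ne_of_mem_of_not_mem (hsg.mapsTo t ht hz) one_notMem_unitDisk)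
  have hne' : 1 - F t z ≠ 0 := by rwa [← neg_sub, neg_ne_zero]
  refine (((hasDerivAt_id (F t z)).const_sub 1).inv hne').comp_hasDerivWithinAt t
    (hsg.ode z hz t ht) |>.congr_deriv ?_
  rw [id]
  field_simp
  ring

end IsContinuousSemigroupOnDisk

theorem stmt5 (F : ℝ → ℂ → ℂ) (f : ℂ → ℂ) (b : ℂ)
    (hsg : IsContinuousSemigroupOnDisk F f)
    (hdw : HasDWPointOne F)
    (hrep : Tendsto (fun z : ℂ => (f z - b * (z - 1) ^ 2) / (z - 1) ^ 2)
      (𝓝[unitDisk] (1 : ℂ)) (𝓝 0)) :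
    ∀ z ∈ unitDisk,
      Tendsto (fun t : ℝ => 1 / ((t : ℂ) * (1 - F t z))) atTop (𝓝 (-b)) := by
  intro z hz
  have hF : Tendsto (fun t => F t z) atTop (𝓝[unitDisk] 1) :=
    tendsto_nhdsWithin_iff.2
      ⟨hdw z hz, (eventually_ge_atTop 0).mono fun t ht => hsg.mapsTo t ht hz⟩
  have hu' : Tendsto (fun t => -(f (F t z) / (F t z - 1) ^ 2)) atTop (𝓝 (-b)) :=
    ((tendsto_div_sub_one_sq_of_tendsto_remainder one_notMem_unitDisk hrep).comp hF).neg
  convert tendsto_inv_smul_atTop_of_hasDerivWithinAt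
    (fun t ht => hsg.hasDerivWithinAt_inv_one_sub hz ht) hu' using 2 with t
  rw [Complex.real_smul, ofReal_inv, one_div, mul_inv]
end
end

section
/- Let (F_t)_{t≥0} be a continuous one-parameter semigroup on Δ with Denjoy–Wolff point τ = 1 whose generator f has no zeros in Δ and admits the representation f(z) = b(z−1)² + R(z), where b ∈ ℂ and lim_{z→1, z∈Δ} R(z)/(z−1)² = 0. Let h be the Koenigs function of f. Then for every z ∈ Δ, lim_{t→∞} ( 1/(1 − F_t(z)) − 1/(1 − F_t(0)) ) = −b·h(z). -/
open Complex Filter Topology Set MeasureTheory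

noncomputable section

/-!
Let `Φ = (1 - ·)⁻¹ + b h`. The Koenigs function linearizes the flow, `h ∘ F t = h + t`, so
`1 / (1 - F t z) - 1 / (1 - F t 0) + b h z = Φ (F t z) - Φ (F t 0)`. Differentiating the same
identity gives `(F t)' = f ∘ F t / f`, hence `(Φ ∘ F t)' = R (F t ·) / (F t · - 1)² / f` with
`R = f - b (· - 1)²`. By Schwarz–Pick, `‖1 - F t w‖ ≤ (1 + r) / (1 - r) ‖1 - F t 0‖` for `‖w‖ ≤ r`,
so `F t → 1` uniformly on `closedBall 0 ‖z‖`; there the derivative of `Φ ∘ F t` tends to `0`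
uniformly, and the mean value theorem finishes the proof.
-/

open Metric ComplexConjugate

theorem unitDisk_eq_ball : unitDisk = ball (0 : ℂ) 1 := by
  ext z; simp [unitDisk]

theorem isOpen_unitDisk : IsOpen unitDisk :=
  unitDisk_eq_ball ▸ isOpen_ball

theorem closedBall_subset_unitDisk {r : ℝ} (hr : r < 1) : closedBall (0 : ℂ) r ⊆ unitDisk :=
  unitDisk_eq_ball ▸ closedBall_subset_ball hr

theorem zero_mem_unitDisk : (0 : ℂ) ∈ unitDisk := by
  simp [unitDisk]

theorem ne_one_of_mem_unitDisk {w : ℂ} (hw : w ∈ unitDisk) : w ≠ 1 :=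
  ne_of_apply_ne norm (by rw [norm_one]; exact hw.ne)

theorem one_sub_conj_mul_ne_zero {c x : ℂ} (hc : ‖c‖ < 1) (hx : ‖x‖ < 1) :
    1 - conj c * x ≠ 0 := by
  have hlt : ‖conj c * x‖ < 1 := by
    rw [norm_mul, Complex.norm_conj]
    exact mul_lt_one_of_nonneg_of_lt_one_left (norm_nonneg c) hc hx.le
  intro h
  rw [← sub_eq_zero.mp h, norm_one] at hlt
  exact lt_irrefl _ hlt

theorem norm_sub_lt_norm_one_sub_conj_mul {a c : ℂ} (ha : ‖a‖ < 1) (hc : ‖c‖ < 1) :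
    ‖a - c‖ < ‖1 - conj c * a‖ := by
  have key : normSq (1 - conj c * a) - normSq (a - c) = (1 - normSq a) * (1 - normSq c) := by
    simp only [normSq_apply, sub_re, sub_im, mul_re, mul_im, conj_re, conj_im, one_re, one_im]
    ring
  have ha2 : normSq a < 1 := by rw [← Complex.sq_norm]; nlinarith [norm_nonneg a]
  have hc2 : normSq c < 1 := by rw [← Complex.sq_norm]; nlinarith [norm_nonneg c]
  rw [← sq_lt_sq₀ (norm_nonneg _) (norm_nonneg _), Complex.sq_norm, Complex.sq_norm]
  nlinarith

/-- Schwarz–Pick at the origin: the Schwarz lemma for `g` followed by the disk automorphism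
`x ↦ (x - g 0) / (1 - conj (g 0) * x)`. -/
theorem norm_sub_apply_zero_le_of_mapsTo_ball {g : ℂ → ℂ} (hd : DifferentiableOn ℂ g (ball 0 1))
    (hm : MapsTo g (ball 0 1) (ball 0 1)) {w : ℂ} (hw : w ∈ ball 0 1) :
    ‖g w - g 0‖ ≤ ‖w‖ * ‖1 - conj (g 0) * g w‖ := by
  have hg : ∀ x ∈ ball (0 : ℂ) 1, ‖g x‖ < 1 := fun x hx => mem_ball_zero_iff.mp (hm hx)
  have hc : ‖g 0‖ < 1 := hg 0 (mem_ball_self one_pos)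
  set G : ℂ → ℂ := fun x => (g x - g 0) / (1 - conj (g 0) * g x)
  have hGd : DifferentiableOn ℂ G (ball 0 1) :=
    (hd.sub_const _).div ((differentiableOn_const 1).sub (hd.const_mul _))
      fun x hx => one_sub_conj_mul_ne_zero hc (hg x hx)
  have hGm : MapsTo G (ball 0 1) (closedBall 0 1) := fun x hx => by
    rw [mem_closedBall_zero_iff, norm_div,
      div_le_one (norm_pos_iff.mpr (one_sub_conj_mul_ne_zero hc (hg x hx)))]
    exact (norm_sub_lt_norm_one_sub_conj_mul (hg x hx) hc).le
  have hschwarz := Complex.norm_le_norm_of_mapsTo_ball hGd hGm (by simp [G]) (mem_ball_zero_iff.mp hw)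
  rwa [norm_div, div_le_iff₀ (norm_pos_iff.mpr (one_sub_conj_mul_ne_zero hc (hg w hw)))] at hschwarz

theorem norm_one_sub_le_of_norm_sub_le {a c : ℂ} {r : ℝ} (hc : ‖c‖ < 1) (hr0 : 0 ≤ r)
    (hr : r < 1) (hac : ‖a - c‖ ≤ r * ‖1 - conj c * a‖) :
    ‖1 - a‖ ≤ (1 + r) / (1 - r) * ‖1 - c‖ := by
  have hdenom : ‖1 - conj c * a‖ ≤ (1 - ‖c‖ ^ 2) + ‖a - c‖ := by
    have hsplit : 1 - conj c * a = ((1 - ‖c‖ ^ 2 : ℝ) : ℂ) + conj c * (c - a) := by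
      push_cast
      rw [← Complex.mul_conj']
      ring
    calc ‖1 - conj c * a‖ ≤ ‖((1 - ‖c‖ ^ 2 : ℝ) : ℂ)‖ + ‖conj c * (c - a)‖ :=
          hsplit ▸ norm_add_le _ _
      _ ≤ (1 - ‖c‖ ^ 2) + ‖a - c‖ := by
          rw [Complex.norm_real, Real.norm_of_nonneg (by nlinarith [norm_nonneg c]), norm_mul,
            Complex.norm_conj, norm_sub_rev]
          nlinarith [norm_nonneg (a - c)]
  have hc1 : 1 - ‖c‖ ^ 2 ≤ 2 * ‖1 - c‖ := by
    have := norm_sub_norm_le (1 : ℂ) c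
    rw [norm_one] at this
    nlinarith [norm_nonneg c]
  have hac' : (1 - r) * ‖a - c‖ ≤ 2 * r * ‖1 - c‖ := by nlinarith
  have h1a : ‖1 - a‖ ≤ ‖1 - c‖ + ‖a - c‖ := by
    simpa [norm_sub_rev a c] using norm_sub_le_norm_sub_add_norm_sub (1 : ℂ) c a
  rw [div_mul_eq_mul_div, le_div_iff₀ (by linarith)]
  nlinarith

theorem norm_one_sub_apply_le_of_mapsTo_ball {g : ℂ → ℂ} (hd : DifferentiableOn ℂ g (ball 0 1))
    (hm : MapsTo g (ball 0 1) (ball 0 1)) {r : ℝ} (hr : r < 1) {w : ℂ} (hw : ‖w‖ ≤ r) :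
    ‖1 - g w‖ ≤ (1 + r) / (1 - r) * ‖1 - g 0‖ := by
  have hw' : w ∈ ball (0 : ℂ) 1 := mem_ball_zero_iff.mpr (hw.trans_lt hr)
  refine norm_one_sub_le_of_norm_sub_le (mem_ball_zero_iff.mp (hm (mem_ball_self one_pos)))
    ((norm_nonneg w).trans hw) hr ?_
  exact (norm_sub_apply_zero_le_of_mapsTo_ball hd hm hw').trans
    (mul_le_mul_of_nonneg_right hw (norm_nonneg _))

theorem hasDerivAt_inv_one_sub_add_mul {f h : ℂ → ℂ} (b : ℂ) {w : ℂ} (hw : w ≠ 1) (hfw : f w ≠ 0)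
    (hh : HasDerivAt h (-(1 / f w)) w) :
    HasDerivAt (fun x => (1 - x)⁻¹ + b * h x) ((f w - b * (w - 1) ^ 2) / (w - 1) ^ 2 / f w) w := by
  have hw' : 1 - w ≠ 0 := sub_ne_zero.mpr hw.symm
  refine ((((hasDerivAt_id w).const_sub 1).inv hw').add (hh.const_mul b)).congr_deriv ?_
  rw [id]
  field_simp [sub_ne_zero.mpr hw]
  ring

namespace IsContinuousSemigroupOnDisk

variable {F : ℝ → ℂ → ℂ} {f h : ℂ → ℂ}

theorem koenigs_apply (hsg : IsContinuousSemigroupOnDisk F f) (hnz : ∀ z ∈ unitDisk, f z ≠ 0)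
    (hh : ∀ z ∈ unitDisk, HasDerivAt h (-(1 / f z)) z) {t : ℝ} (ht : 0 ≤ t) {w : ℂ}
    (hw : w ∈ unitDisk) : h (F t w) = h w + t := by
  have hderiv : ∀ s, 0 ≤ s →
      HasDerivWithinAt (fun s : ℝ => h (F s w) - s) 0 (Ici 0) s := fun s hs => by
    have hFs := hsg.mapsTo s hs hw
    have hd := ((hh _ hFs).comp_hasDerivWithinAt s (hsg.ode w hw s hs)).sub
      ofRealCLM.hasDerivAt.hasDerivWithinAt
    rwa [ofRealCLM_apply, ofReal_one, neg_mul_neg, one_div, inv_mul_cancel₀ (hnz _ hFs),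
      sub_self] at hd
  have hconst := constant_of_has_deriv_right_zero
    (fun s hs => (hderiv s hs.1).continuousWithinAt.mono Icc_subset_Ici_self)
    (fun s hs => (hderiv s hs.1).mono (Ici_subset_Ici.mpr hs.1)) t ⟨ht, le_rfl⟩
  rw [hsg.init w hw, ofReal_zero, sub_zero] at hconst
  exact eq_add_of_sub_eq hconst

theorem hasDerivAt_apply (hsg : IsContinuousSemigroupOnDisk F f) (hnz : ∀ z ∈ unitDisk, f z ≠ 0)
    (hh : ∀ z ∈ unitDisk, HasDerivAt h (-(1 / f z)) z) {t : ℝ} (ht : 0 ≤ t) {w : ℂ}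
    (hw : w ∈ unitDisk) : HasDerivAt (F t) (f (F t w) / f w) w := by
  have hFw := hsg.mapsTo t ht hw
  have hF := ((hsg.holomorphic t ht).differentiableAt (isOpen_unitDisk.mem_nhds hw)).hasDerivAt
  -- differentiate `h ∘ F t = h + t` at `w`
  have hcomp : HasDerivAt (fun x => h x + t) (-(1 / f (F t w)) * deriv (F t) w) w :=
    ((hh _ hFw).comp w hF).congr_of_eventuallyEq <| eventually_of_mem
      (isOpen_unitDisk.mem_nhds hw) fun x hx => (hsg.koenigs_apply hnz hh ht hx).symm
  have huniq := hcomp.unique ((hh w hw).add_const _)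
  have hderiv : deriv (F t) w = f (F t w) / f w := by
    field_simp [hnz w hw, hnz _ hFw] at huniq ⊢
    exact neg_inj.mp huniq
  rwa [hderiv] at hF

theorem tendsto_apply_nhdsWithin_one (hsg : IsContinuousSemigroupOnDisk F f)
    (h0 : Tendsto (fun t => F t 0) atTop (𝓝 1)) {r : ℝ} (hr : r < 1) :
    Tendsto (fun p : ℝ × ℂ => F p.1 p.2) (atTop ×ˢ 𝓟 (closedBall 0 r)) (𝓝[unitDisk] 1) := by
  have hmaps : ∀ᶠ p : ℝ × ℂ in atTop ×ˢ 𝓟 (closedBall 0 r), F p.1 p.2 ∈ unitDisk :=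
    eventually_prod_principal_iff.mpr <| (eventually_ge_atTop 0).mono fun t ht w hw =>
      hsg.mapsTo t ht (closedBall_subset_unitDisk hr hw)
  have hbound : ∀ᶠ p : ℝ × ℂ in atTop ×ˢ 𝓟 (closedBall 0 r),
      ‖F p.1 p.2 - 1‖ ≤ (1 + r) / (1 - r) * ‖1 - F p.1 0‖ :=
    eventually_prod_principal_iff.mpr <| (eventually_ge_atTop 0).mono fun t ht w hw => by
      rw [norm_sub_rev]
      exact norm_one_sub_apply_le_of_mapsTo_ball (unitDisk_eq_ball ▸ hsg.holomorphic t ht)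
        (unitDisk_eq_ball ▸ hsg.mapsTo t ht) hr (mem_closedBall_zero_iff.mp hw)
  have hlim : Tendsto (fun p : ℝ × ℂ => (1 + r) / (1 - r) * ‖1 - F p.1 0‖)
      (atTop ×ˢ 𝓟 (closedBall 0 r)) (𝓝 0) := by
    simpa using (((h0.comp tendsto_fst).const_sub 1).norm.const_mul ((1 + r) / (1 - r)))
  refine tendsto_nhdsWithin_iff.mpr ⟨?_, hmaps⟩
  exact tendsto_iff_norm_sub_tendsto_zero.mpr
    (squeeze_zero' (Eventually.of_forall fun _ => norm_nonneg _) hbound hlim)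

theorem hasDerivAt_inv_one_sub_apply_add_mul (hsg : IsContinuousSemigroupOnDisk F f)
    (hnz : ∀ z ∈ unitDisk, f z ≠ 0) (hh : ∀ z ∈ unitDisk, HasDerivAt h (-(1 / f z)) z) (b : ℂ)
    {t : ℝ} (ht : 0 ≤ t) {w : ℂ} (hw : w ∈ unitDisk) :
    HasDerivAt (fun x => (1 - F t x)⁻¹ + b * h (F t x))
      ((f (F t w) - b * (F t w - 1) ^ 2) / (F t w - 1) ^ 2 / f w) w := by
  have hFw := hsg.mapsTo t ht hw
  refine ((hasDerivAt_inv_one_sub_add_mul b (ne_one_of_mem_unitDisk hFw) (hnz _ hFw)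
    (hh _ hFw)).comp w (hsg.hasDerivAt_apply hnz hh ht hw)).congr_deriv ?_
  field_simp [hnz _ hFw, hnz w hw]

theorem norm_inv_one_sub_sub_add_mul_le (hsg : IsContinuousSemigroupOnDisk F f)
    (hnz : ∀ z ∈ unitDisk, f z ≠ 0) (hh : ∀ z ∈ unitDisk, HasDerivAt h (-(1 / f z)) z)
    (hh0 : h 0 = 0) (b : ℂ) {t : ℝ} (ht : 0 ≤ t) {z : ℂ} (hz : z ∈ unitDisk) {ε C : ℝ}
    (hε : ∀ w ∈ closedBall (0 : ℂ) ‖z‖,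
      ‖(f (F t w) - b * (F t w - 1) ^ 2) / (F t w - 1) ^ 2‖ ≤ ε)
    (hC : ∀ w ∈ closedBall (0 : ℂ) ‖z‖, ‖(f w)⁻¹‖ ≤ C) :
    ‖1 / (1 - F t z) - 1 / (1 - F t 0) + b * h z‖ ≤ ε * C * ‖z‖ := by
  have hmvt := (convex_closedBall (0 : ℂ) ‖z‖).norm_image_sub_le_of_norm_hasDerivWithin_le
    (fun w hw => (hsg.hasDerivAt_inv_one_sub_apply_add_mul hnz hh b ht
      (closedBall_subset_unitDisk hz hw)).hasDerivWithinAt)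
    (fun w hw => by
      rw [div_eq_mul_inv, norm_mul]
      exact mul_le_mul (hε w hw) (hC w hw) (norm_nonneg _) ((norm_nonneg _).trans (hε w hw)))
    (mem_closedBall_self (norm_nonneg z)) (mem_closedBall_zero_iff.mpr le_rfl)
  have hkz := hsg.koenigs_apply hnz hh ht hz
  have hk0 := hsg.koenigs_apply hnz hh ht zero_mem_unitDisk
  rw [hh0, zero_add] at hk0
  rw [sub_zero, hkz, hk0] at hmvt
  refine le_of_eq_of_le (congrArg norm ?_) hmvt
  ring

end IsContinuousSemigroupOnDisk

theorem stmt6 (F : ℝ → ℂ → ℂ) (f h : ℂ → ℂ) (b : ℂ)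
    (hsg : IsContinuousSemigroupOnDisk F f)
    (hdw : HasDWPointOne F)
    (hnz : ∀ z ∈ unitDisk, f z ≠ 0)
    (hrep : Tendsto (fun z : ℂ => (f z - b * (z - 1) ^ 2) / (z - 1) ^ 2)
      (𝓝[unitDisk] (1 : ℂ)) (𝓝 0))
    (hK : IsKoenigsFunction f h) :
    ∀ z ∈ unitDisk,
      Tendsto (fun t : ℝ => 1 / (1 - F t z) - 1 / (1 - F t 0)) atTop
        (𝓝 (-b * h z)) := by
  intro z hz
  obtain ⟨hh, hh0⟩ := hK
  have hball := closedBall_subset_unitDisk (r := ‖z‖) hz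
  obtain ⟨C, hC⟩ := (isCompact_closedBall (0 : ℂ) ‖z‖).exists_bound_of_continuousOn
    ((hsg.gen_holomorphic.continuousOn.mono hball).inv₀ fun w hw => hnz w (hball hw))
  have hC0 : 0 ≤ C := (norm_nonneg _).trans (hC 0 (mem_closedBall_self (norm_nonneg z)))
  -- the remainder term tends to `0` uniformly on `closedBall 0 ‖z‖`
  have hrem := hrep.comp (hsg.tendsto_apply_nhdsWithin_one (hdw 0 zero_mem_unitDisk) hz)
  suffices Tendsto (fun t => 1 / (1 - F t z) - 1 / (1 - F t 0) + b * h z) atTop (𝓝 0) by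
    simpa using this.sub_const (b * h z)
  refine Metric.tendsto_nhds.mpr fun ε hε => ?_
  have hδ : 0 < ε / (C * ‖z‖ + 1) := by positivity
  filter_upwards [eventually_ge_atTop 0,
    eventually_prod_principal_iff.mp (hrem.eventually (closedBall_mem_nhds 0 hδ))] with t ht hq
  rw [dist_zero_right]
  calc _ ≤ ε / (C * ‖z‖ + 1) * C * ‖z‖ := hsg.norm_inv_one_sub_sub_add_mul_le hnz hh hh0 b ht hz
        (fun w hw => mem_closedBall_zero_iff.mp (hq w hw)) hC
    _ < ε := by
        rw [mul_assoc, div_mul_eq_mul_div, div_lt_iff₀ (by positivity)]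
        nlinarith [norm_nonneg z]
end
end

section
/- Let (F_t)_{t≥0} be a continuous one-parameter semigroup on Δ with Denjoy–Wolff point τ = 1 whose generator f admits the representation f(z) = b(z−1)² + c(z−1)³ + R₁(z), where b, c ∈ ℂ, b ≠ 0, and lim_{z→1, z∈Δ} R₁(z)/(z−1)³ = 0. Then for every z ∈ Δ, lim_{t→∞} ( 1/(1 − F_t(z)) + bt + (c/b)·log(t+1) ) / log(t+1) = 0; that is, 1/(1 − F_t(z)) = −bt − (c/b)log(t+1) + G₁(z,t) with G₁(z,t)/log(t+1) → 0 as t → ∞. -/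
open Complex Filter Topology Set MeasureTheory

noncomputable section

/-
With `w t = 1 / (1 - F t z)`, the trajectory equation and the expansion of `f` at `1` give
`w' = -f(F_t)/(1 - F_t)² = -b + (c + ε t) (1 - F_t)` with `ε t → 0`. A continuous Stolz–Cesàro
comparison (if `Φ' = o(ψ')` with `ψ' ≥ 0` and `ψ → ∞`, then `Φ = o(ψ)`, by the fencing
inequality) first gives `w t = -b t + o(t)`, i.e. `t (1 - F_t) → -1/b`. Then the derivative of
`w t + b t + (c/b) log (t + 1)` is `(c + ε t)(1 - F_t) + c / (b (t + 1)) = o(1 / (t + 1))`, and the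
same comparison with `ψ = log (t + 1)` gives the theorem.
-/

open Asymptotics

theorem isLittleO_of_hasDerivWithinAt_isLittleO {E : Type*} [NormedAddCommGroup E]
    [NormedSpace ℝ E] {Φ φ : ℝ → E} {ψ ψ' : ℝ → ℝ} {a : ℝ}
    (hΦ : ∀ t, a ≤ t → HasDerivWithinAt Φ (φ t) (Ici a) t)
    (hψ : ∀ t, a ≤ t → HasDerivAt ψ (ψ' t) t) (hψ'_nonneg : ∀ t, a ≤ t → 0 ≤ ψ' t)
    (hψ_top : Tendsto ψ atTop atTop) (hφ : φ =o[atTop] ψ') : Φ =o[atTop] ψ := by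
  rw [isLittleO_iff]
  intro ε hε
  obtain ⟨T, hT⟩ := eventually_atTop.1 <|
    (hφ.def (half_pos hε)).and (eventually_ge_atTop a)
  have haT : a ≤ T := (hT T le_rfl).2
  have hfence : ∀ t, T ≤ t → ‖Φ t - Φ T‖ ≤ ε / 2 * (ψ t - ψ T) := by
    intro t hTt
    refine image_norm_le_of_norm_deriv_right_le_deriv_boundary' (f := fun s => Φ s - Φ T)
      (f' := φ) (B := fun s => ε / 2 * (ψ s - ψ T)) (B' := fun s => ε / 2 * ψ' s) ?_
      (fun s hs => ?_) (by simp) (fun s hs => ?_) (fun s hs => ?_) (fun s hs => ?_) ⟨hTt, le_rfl⟩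
    · exact fun s hs => ((hΦ s (haT.trans hs.1)).continuousWithinAt.mono
        (Icc_subset_Ici_self.trans (Ici_subset_Ici.2 haT))).sub continuousWithinAt_const
    · exact ((hΦ s (haT.trans hs.1)).mono (Ici_subset_Ici.2 (haT.trans hs.1))).sub_const _
    · exact (((hψ s (haT.trans hs.1)).sub_const _).const_mul _).continuousAt.continuousWithinAt
    · exact (((hψ s (haT.trans hs.1)).sub_const _).const_mul _).hasDerivWithinAt
    · have hs' := hT s hs.1
      rw [Real.norm_of_nonneg (hψ'_nonneg s hs'.2)] at hs'
      exact hs'.1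
  filter_upwards [hψ_top.eventually_ge_atTop 0, eventually_ge_atTop T,
    hψ_top.eventually_ge_atTop (2 / ε * (‖Φ T‖ + ε / 2 * |ψ T|))] with t hψt hTt hbig
  rw [Real.norm_of_nonneg hψt]
  rw [div_mul_eq_mul_div, div_le_iff₀ hε] at hbig
  calc ‖Φ t‖ ≤ ‖Φ T‖ + ‖Φ t - Φ T‖ := norm_le_norm_add_norm_sub' _ _
    _ ≤ ‖Φ T‖ + ε / 2 * (ψ t - ψ T) := by gcongr; exact hfence t hTt
    _ ≤ ε * ψ t := by nlinarith [neg_abs_le (ψ T)]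

/-- `R₁(z) / (z - 1)³` in the representation `f(z) = b(z - 1)² + c(z - 1)³ + R₁(z)`. -/
def cubicRemainderRatio (f : ℂ → ℂ) (b c z : ℂ) : ℂ :=
  (f z - b * (z - 1) ^ 2 - c * (z - 1) ^ 3) / (z - 1) ^ 3

lemma neg_div_one_sub_sq_eq {f : ℂ → ℂ} (b c : ℂ) {z : ℂ} (hz : z ≠ 1) :
    -f z / (1 - z) ^ 2 = -b + (c + cubicRemainderRatio f b c z) * (1 - z) := by
  have hz₁ : z - 1 ≠ 0 := sub_ne_zero.2 hz
  have hz₂ : 1 - z ≠ 0 := sub_ne_zero.2 hz.symm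
  unfold cubicRemainderRatio
  field_simp
  ring

lemma ne_one_of_mem_unitDisk_s7 {z : ℂ} (hz : z ∈ unitDisk) : z ≠ 1 := by
  rintro rfl
  simp [unitDisk] at hz

lemma IsContinuousSemigroupOnDisk.hasDerivWithinAt_inv_one_sub_s7 {F : ℝ → ℂ → ℂ} {f : ℂ → ℂ}
    (hsg : IsContinuousSemigroupOnDisk F f) {z : ℂ} (hz : z ∈ unitDisk) {t : ℝ} (ht : 0 ≤ t) :
    HasDerivWithinAt (fun s => (1 - F s z)⁻¹) (-f (F t z) / (1 - F t z) ^ 2) (Ici 0) t := by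
  have hne : 1 - F t z ≠ 0 := sub_ne_zero.2 (ne_one_of_mem_unitDisk_s7 (hsg.mapsTo t ht hz)).symm
  exact ((hasDerivAt_inv hne).comp_hasDerivWithinAt t ((hsg.ode z hz t ht).const_sub 1)
    ).congr_deriv (by ring)

section

variable {v e : ℝ → ℂ} {b c : ℂ}

lemma tendsto_mul_of_hasDerivWithinAt_inv
    (hderiv : ∀ t, 0 ≤ t → HasDerivWithinAt (fun s => (v s)⁻¹) (-b + (c + e t) * v t) (Ici 0) t)
    (hv : Tendsto v atTop (𝓝 0)) (he : Tendsto e atTop (𝓝 0)) (hb : b ≠ 0) :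
    Tendsto (fun t : ℝ => t * v t) atTop (𝓝 (-b⁻¹)) := by
  have hlin : (fun t : ℝ => (v t)⁻¹ + b * t) =o[atTop] (fun t => t) := by
    refine isLittleO_of_hasDerivWithinAt_isLittleO (a := 0) (ψ' := fun _ => 1)
      (fun t ht => ?_) (fun t _ => hasDerivAt_id t) (fun _ _ => zero_le_one) tendsto_id
      ((isLittleO_one_iff ℝ).2 (by simpa using ((tendsto_const_nhds (x := c)).add he).mul hv))
    refine ((hderiv t ht).add ((hasDerivAt_id t).ofReal_comp.const_mul b).hasDerivWithinAt
      ).congr_deriv ?_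
    simp
  have hdiv : Tendsto (fun t : ℝ => (v t)⁻¹ / t) atTop (𝓝 (-b)) := by
    have := (Complex.isLittleO_ofReal_right.2 hlin).tendsto_div_nhds_zero.sub_const b
    rw [zero_sub] at this
    refine this.congr' ?_
    filter_upwards [eventually_ne_atTop 0] with t ht
    have : (t : ℂ) ≠ 0 := by exact_mod_cast ht
    field_simp
    ring
  simpa [inv_div, div_inv_eq_mul] using hdiv.inv₀ (neg_ne_zero.2 hb)

lemma isLittleO_log_of_hasDerivWithinAt_inv
    (hderiv : ∀ t, 0 ≤ t → HasDerivWithinAt (fun s => (v s)⁻¹) (-b + (c + e t) * v t) (Ici 0) t)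
    (hv : Tendsto v atTop (𝓝 0)) (he : Tendsto e atTop (𝓝 0)) (hb : b ≠ 0) :
    (fun t : ℝ => (v t)⁻¹ + b * t + c / b * Real.log (t + 1)) =o[atTop]
      (fun t => Real.log (t + 1)) := by
  have hmul := tendsto_mul_of_hasDerivWithinAt_inv hderiv hv he hb
  have hlog : ∀ t : ℝ, 0 ≤ t → HasDerivAt (fun s => Real.log (s + 1)) (t + 1)⁻¹ t :=
    fun t ht => (((hasDerivAt_id t).add_const 1).log (by positivity)).congr_deriv (by simp)
  refine isLittleO_of_hasDerivWithinAt_isLittleO (a := 0)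
    (φ := fun t => (c + e t) * v t + c / b * ((t + 1)⁻¹ : ℝ)) (fun t ht => ?_) hlog
    (fun t ht => by positivity)
    (Real.tendsto_log_atTop.comp (tendsto_atTop_add_const_right _ 1 tendsto_id)) ?_
  · refine (((hderiv t ht).add ((hasDerivAt_id t).ofReal_comp.const_mul b).hasDerivWithinAt).add
      ((hlog t ht).ofReal_comp.const_mul (c / b)).hasDerivWithinAt).congr_deriv ?_
    push_cast
    ring
  rw [← Complex.isLittleO_ofReal_right, isLittleO_iff_tendsto' (by
    filter_upwards [eventually_ge_atTop 0] with t ht h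
    exact absurd h (by simp only [Complex.ofReal_ne_zero]; positivity))]
  have hlim : Tendsto (fun t : ℝ => (c + e t) * (t * v t + v t) + c / b) atTop
      (𝓝 ((c + 0) * (-b⁻¹ + 0) + c / b)) :=
    (((tendsto_const_nhds (x := c)).add he).mul (hmul.add hv)).add_const _
  rw [add_zero, add_zero, mul_neg, ← div_eq_mul_inv, neg_add_cancel] at hlim
  refine hlim.congr' ?_
  filter_upwards [eventually_ge_atTop 0] with t ht
  have : (t : ℂ) + 1 ≠ 0 := by exact_mod_cast (by positivity : t + 1 ≠ 0)
  push_cast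
  field_simp

end

theorem stmt7 (F : ℝ → ℂ → ℂ) (f : ℂ → ℂ) (b c : ℂ)
    (hsg : IsContinuousSemigroupOnDisk F f)
    (hdw : HasDWPointOne F)
    (hb : b ≠ 0)
    (hrep : Tendsto (fun z : ℂ => (f z - b * (z - 1) ^ 2 - c * (z - 1) ^ 3) / (z - 1) ^ 3)
      (𝓝[unitDisk] (1 : ℂ)) (𝓝 0)) :
    ∀ z ∈ unitDisk,
      Tendsto (fun t : ℝ =>
          (1 / (1 - F t z) + b * (t : ℂ) + (c / b) * (Real.log (t + 1) : ℂ)) /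
            (Real.log (t + 1) : ℂ)) atTop (𝓝 0) := by
  intro z hz
  have hderiv : ∀ t, 0 ≤ t → HasDerivWithinAt (fun s => (1 - F s z)⁻¹)
      (-b + (c + cubicRemainderRatio f b c (F t z)) * (1 - F t z)) (Ici 0) t := fun t ht => by
    rw [← neg_div_one_sub_sq_eq b c (ne_one_of_mem_unitDisk_s7 (hsg.mapsTo t ht hz))]
    exact hsg.hasDerivWithinAt_inv_one_sub_s7 hz ht
  have hv : Tendsto (fun t => 1 - F t z) atTop (𝓝 0) := by
    simpa using (tendsto_const_nhds (x := (1 : ℂ))).sub (hdw z hz)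
  have he : Tendsto (fun t => cubicRemainderRatio f b c (F t z)) atTop (𝓝 0) :=
    hrep.comp (tendsto_nhdsWithin_iff.2
      ⟨hdw z hz, eventually_atTop.2 ⟨0, fun t ht => hsg.mapsTo t ht hz⟩⟩)
  simpa [one_div] using (Complex.isLittleO_ofReal_right.2
    (isLittleO_log_of_hasDerivWithinAt_inv hderiv hv he hb)).tendsto_div_nhds_zero
end
end

section
/- Let (Φ_t)_{t≥0} be a continuous one-parameter semigroup on the right half-plane Π with Denjoy–Wolff point at ∞, generated by −φ, where φ admits the representation φ(w) = β + ϱ(w) with β ∈ ℂ and ϱ(w) → 0 as |w| → ∞, w ∈ Π. Then for every w ∈ Π, lim_{t→∞} Φ_t(w)/t = β. -/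
open Complex Filter Topology Set MeasureTheory

noncomputable section

/-- The right half-plane in the complex plane. -/
def rightHalfPlane : Set ℂ := {w : ℂ | 0 < w.re}

/-- A continuous one-parameter semigroup `Φ` on the right half-plane generated by `-φ`,
where `Re φ ≥ 0`: each `Φ t` is a holomorphic self-map of the half-plane, `Φ 0 = id`,
`Φ (t+s) = Φ t ∘ Φ s`, and for each `w` the trajectory `t ↦ Φ t w` solves
`∂Φ_t(w)/∂t = φ(Φ_t(w))`. -/
structure IsContinuousSemigroupOnHalfPlane (Φ : ℝ → ℂ → ℂ) (φ : ℂ → ℂ) : Prop where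
  mapsTo : ∀ t : ℝ, 0 ≤ t → Set.MapsTo (Φ t) rightHalfPlane rightHalfPlane
  holomorphic : ∀ t : ℝ, 0 ≤ t → DifferentiableOn ℂ (Φ t) rightHalfPlane
  init : ∀ w ∈ rightHalfPlane, Φ 0 w = w
  semigroup : ∀ t s : ℝ, 0 ≤ t → 0 ≤ s → ∀ w ∈ rightHalfPlane, Φ (t + s) w = Φ t (Φ s w)
  gen_holomorphic : DifferentiableOn ℂ φ rightHalfPlane
  gen_re_nonneg : ∀ w ∈ rightHalfPlane, 0 ≤ (φ w).re
  ode : ∀ w ∈ rightHalfPlane, ∀ t : ℝ, 0 ≤ t →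
    HasDerivWithinAt (fun s : ℝ => Φ s w) (φ (Φ t w)) (Set.Ici (0 : ℝ)) t

/-- The semigroup has Denjoy–Wolff point at `∞`. -/
def HasDWPointInfty (Φ : ℝ → ℂ → ℂ) : Prop :=
  ∀ w ∈ rightHalfPlane, Tendsto (fun t : ℝ => ‖Φ t w‖) atTop atTop

/-- The filter of neighbourhoods of `∞` within a set `S ⊆ ℂ`:
`|w| → ∞` with `w ∈ S`. -/
def atInftyWithin (S : Set ℂ) : Filter ℂ :=
  Filter.comap (fun w : ℂ => ‖w‖) Filter.atTop ⊓ Filter.principal S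

/-- `σ` solves `σ' = 1/φ` on the right half-plane with `σ 1 = 0`. -/
def IsSigmaFunction (φ σ : ℂ → ℂ) : Prop :=
  (∀ w ∈ rightHalfPlane, HasDerivAt σ (1 / φ w) w) ∧ σ 1 = 0

/-!
Along a trajectory `f t = Φ_t(w)` we have `f' = φ ∘ f`, and since `f t → ∞` inside `Π`, the
hypothesis on `φ` gives `f' t → β`. A function on `ℝ` whose derivative tends to `β` grows like
`β t`: after subtracting `t β` the derivative tends to `0`, and the mean value inequality turns
this into `f t - t β = o(t)`.
-/

section MeanValue

variable {E : Type*} [NormedAddCommGroup E] [NormedSpace ℝ E] {f f' : ℝ → E}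

theorem isLittleO_id_atTop_of_hasDerivAt_of_tendsto_zero
    (hf : ∀ᶠ t in atTop, HasDerivAt f (f' t) t) (hf' : Tendsto f' atTop (𝓝 0)) :
    f =o[atTop] id := by
  refine Asymptotics.isLittleO_iff.2 fun c hc => ?_
  have hsmall : ∀ᶠ t in atTop, ‖f' t‖ ≤ c / 2 :=
    hf'.norm.eventually (ge_mem_nhds (by simpa using half_pos hc))
  obtain ⟨T, hT⟩ := eventually_atTop.1 ((hf.and hsmall).and (eventually_ge_atTop 0))
  have hmv : ∀ t ∈ Ici T, ‖f t - f T‖ ≤ c / 2 * ‖t - T‖ := fun t ht =>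
    (convex_Ici T).norm_image_sub_le_of_norm_hasDerivWithin_le
      (fun s hs => (hT s hs).1.1.hasDerivWithinAt) (fun s hs => (hT s hs).1.2)
      (le_refl T) ht
  filter_upwards [(Asymptotics.isLittleO_const_id_atTop (f T)).def (half_pos hc),
    eventually_ge_atTop T] with t hconst htT
  have hT0 : 0 ≤ T := (hT T le_rfl).2
  have ht0 : 0 ≤ t := hT0.trans htT
  calc ‖f t‖ ≤ ‖f T‖ + ‖f t - f T‖ := norm_le_norm_add_norm_sub' _ _
    _ ≤ c / 2 * ‖t‖ + c / 2 * ‖t - T‖ := add_le_add hconst (hmv t htT)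
    _ ≤ c * ‖id t‖ := by
      rw [id, Real.norm_of_nonneg ht0, Real.norm_of_nonneg (sub_nonneg.2 htT)]
      linarith [mul_nonneg hc.le hT0]

theorem tendsto_inv_smul_atTop_of_hasDerivAt_of_tendsto {β : E}
    (hf : ∀ᶠ t in atTop, HasDerivAt f (f' t) t) (hf' : Tendsto f' atTop (𝓝 β)) :
    Tendsto (fun t => t⁻¹ • f t) atTop (𝓝 β) := by
  have hlin : (fun t => f t - t • β) =o[atTop] id := by
    refine isLittleO_id_atTop_of_hasDerivAt_of_tendsto_zero (f' := fun t => f' t - β) ?_ ?_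
    · filter_upwards [hf] with t ht
      exact (ht.sub ((hasDerivAt_id t).smul_const β)).congr_deriv (by simp)
    · simpa using hf'.sub_const β
  have hmean := hlin.tendsto_inv_smul_nhds_zero.add_const β
  rw [zero_add] at hmean
  refine hmean.congr' ?_
  filter_upwards [eventually_ne_atTop 0] with t ht
  simp [smul_sub, smul_smul, inv_mul_cancel₀ ht]

end MeanValue

theorem HasDWPointInfty.tendsto_atInftyWithin {Φ : ℝ → ℂ → ℂ} {φ : ℂ → ℂ}
    (hdw : HasDWPointInfty Φ) (hsg : IsContinuousSemigroupOnHalfPlane Φ φ)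
    {w : ℂ} (hw : w ∈ rightHalfPlane) :
    Tendsto (fun t => Φ t w) atTop (atInftyWithin rightHalfPlane) :=
  tendsto_inf.2 ⟨tendsto_comap_iff.2 (hdw w hw),
    tendsto_principal.2 (eventually_atTop.2 ⟨0, fun t ht => hsg.mapsTo t ht hw⟩)⟩

theorem stmt12 (Φ : ℝ → ℂ → ℂ) (φ : ℂ → ℂ) (β : ℂ)
    (hsg : IsContinuousSemigroupOnHalfPlane Φ φ)
    (hdw : HasDWPointInfty Φ)
    (hrep : Tendsto (fun w : ℂ => φ w - β) (atInftyWithin rightHalfPlane) (𝓝 0)) :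
    ∀ w ∈ rightHalfPlane,
      Tendsto (fun t : ℝ => Φ t w / (t : ℂ)) atTop (𝓝 β) := by
  intro w hw
  have hderiv : ∀ᶠ t in atTop, HasDerivAt (fun s => Φ s w) (φ (Φ t w)) t := by
    filter_upwards [eventually_gt_atTop 0] with t ht
    exact (hsg.ode w hw t ht.le).hasDerivAt (Ici_mem_nhds ht)
  have hφ : Tendsto (fun t => φ (Φ t w)) atTop (𝓝 β) := by
    simpa using (hrep.comp (hdw.tendsto_atInftyWithin hsg hw)).add_const β
  refine (tendsto_inv_smul_atTop_of_hasDerivAt_of_tendsto hderiv hφ).congr fun t => ?_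
  simp [Complex.real_smul, div_eq_inv_mul]
end
end
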